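/- arXiv:2109.09136 — 7 statements merged into one kernel-verified Lean document; each statement's English description precedes it below -/
import Mathlib

section
/- Saturation property: Let ω ∈ (0,1], let w ∈ H and Λ ⊆ 𝒥 be finite with supp w ⊆ Λ and ‖(B w − f)|_Λ‖ ≥ ω‖B w − f‖, and let u_Λ be the Galerkin solution on Λ, i.e., supp u_Λ ⊆ Λ and (B u_Λ − f)|_Λ = 0. Then ‖u − u_Λ‖_B ≤ (1 − ω²/κ(B))^{1/2} ‖u − w‖_B. -/
/-!
Galerkin orthogonality splits `u - w` B-orthogonally into `u - u_Λ` and `u_Λ - w`, so it suffices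
to show `ω² ‖u - w‖_B² ≤ κ(B) ‖u_Λ - w‖_B²`. Testing `B (u_Λ - w)` against the restricted residual
`d = (B w - f)|_Λ` gives `‖d‖² = -⟪B (u_Λ - w), d⟫ ≤ ‖B‖^{1/2} ‖d‖ ‖u_Λ - w‖_B` by Cauchy–Schwarz
for the energy inner product, while `‖u - w‖_B² ≤ ‖B⁻¹‖ ‖B w - f‖² ≤ ‖B⁻¹‖ ‖d‖² / ω²`.
-/

open scoped RealInnerProductSpace

open Classical in
noncomputable def restr {J : Type*} (Λ : Set J) (v : lp (fun _ : J => ℝ) 2) :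
    lp (fun _ : J => ℝ) 2 :=
  ⟨fun i => if i ∈ Λ then v i else 0, by
    have hv : Memℓp (fun i => v i) 2 := lp.memℓp v
    have : Memℓp (fun i => if i ∈ Λ then v i else 0) 2 := by
      rw [memℓp_gen_iff (by norm_num)] at hv ⊢
      refine Summable.of_nonneg_of_le (fun i => ?_) (fun i => ?_) hv
      · positivity
      · by_cases h : i ∈ Λ <;> simp [h] <;> positivity
    exact this⟩

section Restriction

variable {J : Type*}

theorem restr_apply_of_mem {S : Set J} (v : lp (fun _ : J => ℝ) 2) {i : J} (hi : i ∈ S) :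
    restr S v i = v i := by
  classical
  exact if_pos hi

theorem restr_apply_of_notMem {S : Set J} (v : lp (fun _ : J => ℝ) 2) {i : J} (hi : i ∉ S) :
    restr S v i = 0 := by
  classical
  exact if_neg hi

theorem lp.inner_eq_zero_of_eqOn_zero_of_eqOn_compl_zero (S : Set J)
    {g d : lp (fun _ : J => ℝ) 2} (hg : ∀ i ∈ S, g i = 0) (hd : ∀ i ∉ S, d i = 0) :
    ⟪g, d⟫ = 0 := by
  rw [lp.inner_eq_tsum]
  refine (tsum_congr fun i => ?_).trans tsum_zero
  by_cases hi : i ∈ S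
  · simp [hg i hi]
  · simp [hd i hi]

theorem inner_restr_self (S : Set J) (v : lp (fun _ : J => ℝ) 2) :
    ⟪v, restr S v⟫ = ‖restr S v‖ ^ 2 := by
  have hcompl : ⟪v - restr S v, restr S v⟫ = 0 :=
    lp.inner_eq_zero_of_eqOn_zero_of_eqOn_compl_zero S
      (fun i hi => by simp [restr_apply_of_mem v hi]) (fun i hi => restr_apply_of_notMem v hi)
  rw [← real_inner_self_eq_norm_sq, ← zero_add ⟪restr S v, restr S v⟫, ← hcompl,
    ← inner_add_left, sub_add_cancel]

end Restriction

section Energy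

variable {E : Type*} [NormedAddCommGroup E] [InnerProductSpace ℝ E]

theorem ContinuousLinearMap.inner_map_self_le_opNorm_mul_sq (B : E →L[ℝ] E) (x : E) :
    ⟪B x, x⟫ ≤ ‖B‖ * ‖x‖ ^ 2 :=
  calc ⟪B x, x⟫ ≤ ‖B x‖ * ‖x‖ := real_inner_le_norm _ _
    _ ≤ ‖B‖ * ‖x‖ * ‖x‖ := by gcongr; exact B.le_opNorm x
    _ = ‖B‖ * ‖x‖ ^ 2 := by ring

theorem ContinuousLinearMap.inner_map_self_le_of_leftInverse {B Binv : E →L[ℝ] E}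
    (h : Function.LeftInverse Binv B) (x : E) :
    ⟪B x, x⟫ ≤ ‖Binv‖ * ‖B x‖ ^ 2 := by
  calc ⟪B x, x⟫ = ⟪Binv (B x), B x⟫ := by rw [h x, real_inner_comm]
    _ ≤ ‖Binv‖ * ‖B x‖ ^ 2 := Binv.inner_map_self_le_opNorm_mul_sq (B x)

theorem LinearMap.IsSymmetric.inner_map_add_self_of_inner_eq_zero {B : E →ₗ[ℝ] E}
    (hB : B.IsSymmetric) {x y : E} (h : ⟪B x, y⟫ = 0) :
    ⟪B (x + y), x + y⟫ = ⟪B x, x⟫ + ⟪B y, y⟫ := by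
  have h' : ⟪B y, x⟫ = 0 := by rw [hB, real_inner_comm, h]
  rw [map_add, inner_add_left, inner_add_right, inner_add_right, h, h']
  ring

theorem ContinuousLinearMap.IsPositive.inner_sq_le {B : E →L[ℝ] E} (hB : B.IsPositive)
    (x y : E) : ⟪B x, y⟫ ^ 2 ≤ ⟪B x, x⟫ * ⟪B y, y⟫ := by
  simpa using LinearMap.BilinForm.apply_sq_le_of_symm ((innerₗ E) ∘ₗ (B : E →ₗ[ℝ] E))
    hB.inner_nonneg_left ⟨fun x y => by simp [hB.inner_left_eq_inner_right y x, real_inner_comm]⟩ x y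

theorem ContinuousLinearMap.IsPositive.sq_norm_le_opNorm_mul_of_inner_eq_neg
    {B : E →L[ℝ] E} (hB : B.IsPositive) {x y : E} (h : ⟪B x, y⟫ = -‖y‖ ^ 2) :
    ‖y‖ ^ 2 ≤ ‖B‖ * ⟪B x, x⟫ := by
  have hcs : ‖y‖ ^ 2 * ‖y‖ ^ 2 ≤ ‖B‖ * ⟪B x, x⟫ * ‖y‖ ^ 2 :=
    calc ‖y‖ ^ 2 * ‖y‖ ^ 2 = ⟪B x, y⟫ ^ 2 := by rw [h]; ring
      _ ≤ ⟪B x, x⟫ * ⟪B y, y⟫ := hB.inner_sq_le x y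
      _ ≤ ⟪B x, x⟫ * (‖B‖ * ‖y‖ ^ 2) :=
          mul_le_mul_of_nonneg_left (B.inner_map_self_le_opNorm_mul_sq y) (hB.inner_nonneg_left x)
      _ = ‖B‖ * ⟪B x, x⟫ * ‖y‖ ^ 2 := by ring
  rcases (sq_nonneg ‖y‖).eq_or_lt with hy | hy
  · rw [← hy]
    exact mul_nonneg (norm_nonneg B) (hB.inner_nonneg_left x)
  · exact le_of_mul_le_mul_right hcs hy

end Energy

theorem Real.sqrt_le_sqrt_one_sub_div_mul_sqrt {G P E c κ : ℝ} (hE : E = G + P) (hG : 0 ≤ G)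
    (hP : 0 ≤ P) (hκ : 0 ≤ κ) (h : c * E ≤ κ * P) :
    √G ≤ √(1 - c / κ) * √E := by
  have hcE : c / κ * E ≤ P := by
    rcases hκ.eq_or_lt with rfl | hκ
    · simpa using hP -- `c / 0 = 0`
    · rw [div_mul_eq_mul_div, div_le_iff₀ hκ]
      linarith
  rw [← Real.sqrt_mul' _ (by linarith)]
  exact Real.sqrt_le_sqrt (by linarith)

theorem stmt_4_general {J : Type*}
    (B Binv : lp (fun _ : J => ℝ) 2 →L[ℝ] lp (fun _ : J => ℝ) 2)
    (rB RB : ℝ) (hrB : 0 < rB)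
    (hsa : ∀ x y, ⟪B x, y⟫ = ⟪x, B y⟫)
    (hell : ∀ v, rB * ‖v‖ ^ 2 ≤ ⟪B v, v⟫ ∧ ⟪B v, v⟫ ≤ RB * ‖v‖ ^ 2)
    (hinv1 : Binv.comp B = ContinuousLinearMap.id ℝ _)
    (f u : lp (fun _ : J => ℝ) 2) (hu : B u = f)
    (ω : ℝ) (hω0 : 0 < ω)
    (w : lp (fun _ : J => ℝ) 2) (Λ : Finset J)
    (hsupp : ∀ i : J, i ∉ Λ → w i = 0)
    (hdoerfler : ω * ‖B w - f‖ ≤ ‖restr (↑Λ) (B w - f)‖)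
    (uΛ : lp (fun _ : J => ℝ) 2)
    (huΛsupp : ∀ i : J, i ∉ Λ → uΛ i = 0)
    (huΛ : ∀ i ∈ Λ, (B uΛ) i = f i) :
    Real.sqrt ⟪B (u - uΛ), u - uΛ⟫ ≤
      Real.sqrt (1 - ω ^ 2 / (‖B‖ * ‖Binv‖)) * Real.sqrt ⟪B (u - w), u - w⟫ := by
  have hB : B.IsPositive :=
    B.isPositive_iff.2 ⟨hsa, fun v => (by positivity : 0 ≤ rB * ‖v‖ ^ 2).trans (hell v).1⟩
  set d := restr (↑Λ) (B w - f)
  have hgalerkin : ∀ x : lp (fun _ : J => ℝ) 2, (∀ i ∉ (Λ : Set J), x i = 0) →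
      ⟪B (u - uΛ), x⟫ = 0 := fun x hx =>
    lp.inner_eq_zero_of_eqOn_zero_of_eqOn_compl_zero _ (fun i hi => by simp [hu, huΛ i hi]) hx
  have hpythagoras : ⟪B (u - w), u - w⟫ = ⟪B (u - uΛ), u - uΛ⟫ + ⟪B (uΛ - w), uΛ - w⟫ := by
    rw [← sub_add_sub_cancel u uΛ w]
    exact hB.isSymmetric.inner_map_add_self_of_inner_eq_zero
      (hgalerkin _ fun i hi => by simp [hsupp i hi, huΛsupp i hi])
  have hcorrection : ⟪B (uΛ - w), d⟫ = -‖d‖ ^ 2 := by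
    have hsplit : B (uΛ - w) = -B (u - uΛ) - (B w - f) := by simp only [map_sub, hu]; abel
    rw [hsplit, inner_sub_left, inner_neg_left, hgalerkin d fun i hi => restr_apply_of_notMem _ hi,
      inner_restr_self]
    ring
  have hresidual : ω ^ 2 * ‖B w - f‖ ^ 2 ≤ ‖d‖ ^ 2 := by
    rw [← mul_pow]; exact pow_le_pow_left₀ (by positivity) hdoerfler 2
  have herror : ⟪B (u - w), u - w⟫ ≤ ‖Binv‖ * ‖B w - f‖ ^ 2 :=
    calc ⟪B (u - w), u - w⟫ ≤ ‖Binv‖ * ‖B (u - w)‖ ^ 2 :=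
          B.inner_map_self_le_of_leftInverse (fun x => DFunLike.congr_fun hinv1 x) (u - w)
      _ = ‖Binv‖ * ‖B w - f‖ ^ 2 := by rw [map_sub, hu, norm_sub_rev]
  refine Real.sqrt_le_sqrt_one_sub_div_mul_sqrt hpythagoras (hB.inner_nonneg_left _)
    (hB.inner_nonneg_left _) (by positivity) ?_
  calc ω ^ 2 * ⟪B (u - w), u - w⟫ ≤ ‖Binv‖ * (ω ^ 2 * ‖B w - f‖ ^ 2) := by
        rw [mul_left_comm]; gcongr
    _ ≤ ‖Binv‖ * (‖B‖ * ⟪B (uΛ - w), uΛ - w⟫) := mul_le_mul_of_nonneg_left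
        (hresidual.trans (hB.sq_norm_le_opNorm_mul_of_inner_eq_neg hcorrection)) (norm_nonneg _)
    _ = ‖B‖ * ‖Binv‖ * ⟪B (uΛ - w), uΛ - w⟫ := by ring

/-- **Saturation property** (Lemma 3.1 of the paper).  Let `B` be a bounded self-adjoint
operator on `H = ℓ²(𝒥)` with `r_B‖v‖² ≤ ⟨Bv,v⟩ ≤ R_B‖v‖²`, boundedly invertible with
inverse `Binv`, `κ(B) = ‖B‖·‖B⁻¹‖`, and `u = B⁻¹f`.  Let `ω ∈ (0,1]`, let `w ∈ H` and
`Λ ⊆ 𝒥` be finite with `supp w ⊆ Λ` and `‖(Bw − f)|_Λ‖ ≥ ω‖Bw − f‖`, and let `u_Λ` be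
the Galerkin solution on `Λ`.  Then `‖u − u_Λ‖_B ≤ (1 − ω²/κ(B))^{1/2}‖u − w‖_B`. -/
theorem stmt_4 {J : Type*} [Countable J]
    (B Binv : lp (fun _ : J => ℝ) 2 →L[ℝ] lp (fun _ : J => ℝ) 2)
    (rB RB : ℝ) (hrB : 0 < rB) (hrRB : rB ≤ RB)
    (hsa : ∀ x y, ⟪B x, y⟫ = ⟪x, B y⟫)
    (hell : ∀ v, rB * ‖v‖ ^ 2 ≤ ⟪B v, v⟫ ∧ ⟪B v, v⟫ ≤ RB * ‖v‖ ^ 2)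
    (hinv1 : Binv.comp B = ContinuousLinearMap.id ℝ _)
    (hinv2 : B.comp Binv = ContinuousLinearMap.id ℝ _)
    (f u : lp (fun _ : J => ℝ) 2) (hu : B u = f)
    (ω : ℝ) (hω0 : 0 < ω) (hω1 : ω ≤ 1)
    (w : lp (fun _ : J => ℝ) 2) (Λ : Finset J)
    (hsupp : ∀ i : J, i ∉ Λ → w i = 0)
    (hdoerfler : ω * ‖B w - f‖ ≤ ‖restr (↑Λ) (B w - f)‖)
    (uΛ : lp (fun _ : J => ℝ) 2)
    (huΛsupp : ∀ i : J, i ∉ Λ → uΛ i = 0)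
    (huΛ : ∀ i ∈ Λ, (B uΛ) i = f i) :
    Real.sqrt ⟪B (u - uΛ), u - uΛ⟫ ≤
      Real.sqrt (1 - ω ^ 2 / (‖B‖ * ‖Binv‖)) * Real.sqrt ⟪B (u - w), u - w⟫ :=
  stmt_4_general B Binv rB RB hrB hsa hell hinv1 f u hu ω hω0 w Λ hsupp hdoerfler uΛ huΛsupp huΛ
end

section
/- Let η > 0 and let Λ ⊆ S be a finite tree such that ẽ(δ) ≤ η for every leaf δ ∈ L(Λ). Then Σ_{δ ∈ L(Λ)} e(δ) ≤ (#Λ)·η. -/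
/-!
At a node `δ` of `Λ` with `e δ > 0`, unwinding the recursion for `ẽ` along the path to the root
gives `ẽ(δ)⁻¹ = ∑_{γ ≼ δ} e(γ)⁻¹` over the ancestors `γ` of `δ`, all of which lie in `Λ`. Hence
`e(δ) = ẽ(δ) ∑_{γ ≼ δ} e(δ)/e(γ) ≤ η ∑_{γ ≼ δ} e(δ)/e(γ)` at every leaf. Summing over the leaves
and exchanging the sums, each `γ ∈ Λ` contributes `(∑ e over the leaves below γ) / e(γ)`, which
is at most `1` by subadditivity.
-/

/-- A subset `T` of a forest (with parent map `parent`, roots = nodes with no parent)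
is a tree if it contains all roots and the parent of each of its non-root elements. -/
def IsTree {S : Type*} (parent : S → Option S) (T : Set S) : Prop :=
  (∀ δ : S, parent δ = none → δ ∈ T) ∧
    ∀ δ ∈ T, ∀ δ' : S, parent δ = some δ' → δ' ∈ T

open Finset

theorem Finset.sum_biUnion_le_sum_sum {ι α M : Type*} [DecidableEq α] [AddCommMonoid M]
    [PartialOrder M] [IsOrderedAddMonoid M] {f : α → M} (hf : ∀ a, 0 ≤ f a)
    (s : Finset ι) (t : ι → Finset α) :
    ∑ a ∈ s.biUnion t, f a ≤ ∑ i ∈ s, ∑ a ∈ t i, f a := by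
  classical
  induction s using Finset.induction_on with
  | empty => simp
  | insert i s hi ih =>
    rw [biUnion_insert, sum_insert hi]
    calc ∑ a ∈ t i ∪ s.biUnion t, f a
        ≤ ∑ a ∈ t i ∪ s.biUnion t, f a + ∑ a ∈ t i ∩ s.biUnion t, f a :=
          le_add_of_nonneg_right (sum_nonneg fun a _ => hf a)
      _ = ∑ a ∈ t i, f a + ∑ a ∈ s.biUnion t, f a := sum_union_inter
      _ ≤ ∑ a ∈ t i, f a + ∑ j ∈ s, ∑ a ∈ t j, f a := by gcongr

section Forest

variable {S : Type*} {parent : S → Option S}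

def IsAncestor (parent : S → Option S) : S → S → Prop :=
  Relation.ReflTransGen fun γ δ => parent δ = some γ

open Classical in
noncomputable def leaves (parent : S → Option S) (Λ : Finset S) : Finset S :=
  Λ.filter fun δ => ∀ δ' : S, parent δ' = some δ → δ' ∉ Λ

theorem mem_leaves {Λ : Finset S} {δ : S} :
    δ ∈ leaves parent Λ ↔ δ ∈ Λ ∧ ∀ δ' : S, parent δ' = some δ → δ' ∉ Λ := by
  simp [leaves]

theorem IsTree.mem_of_isAncestor {Λ : Finset S} (hΛ : IsTree parent ↑Λ) {γ δ : S}
    (h : IsAncestor parent γ δ) (hδ : δ ∈ Λ) : γ ∈ Λ := by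
  induction h with
  | refl => exact hδ
  | tail _ hparent ih => exact ih (hΛ.2 _ hδ _ hparent)

theorem not_isAncestor_of_parent_eq_some (hwf : WellFounded fun b a : S => parent a = some b)
    {γ c : S} (hc : parent c = some γ) : ¬ IsAncestor parent c γ := fun h =>
  hwf.transGen.irrefl.irrefl γ (Relation.TransGen.head' hc h)

theorem isAncestor_iff_of_parent_eq_none {γ δ : S} (hδ : parent δ = none) :
    IsAncestor parent γ δ ↔ γ = δ := by
  rw [IsAncestor, Relation.ReflTransGen.cases_tail_iff]
  simp [hδ, eq_comm]

theorem isAncestor_iff_of_parent_eq_some {γ δ p : S} (hδ : parent δ = some p) :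
    IsAncestor parent γ δ ↔ γ = δ ∨ IsAncestor parent γ p := by
  rw [IsAncestor, Relation.ReflTransGen.cases_tail_iff]
  simp [hδ, eq_comm]

end Forest

section Subadditive

variable {S : Type*} {parent : S → Option S} {e : S → ℝ}

def IsSubadditive (parent : S → Option S) (e : S → ℝ) : Prop :=
  ∀ (γ : S) (F : Finset S), (∀ c ∈ F, parent c = some γ) → ∑ c ∈ F, e c ≤ e γ

theorem isSubadditive_of_tsum_le (hcfin : ∀ δ : S, {δ' : S | parent δ' = some δ}.Finite)
    (he0 : ∀ δ : S, 0 ≤ e δ)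
    (hsub : ∀ δ : S, ∑' δ' : {x : S // parent x = some δ}, e δ'.1 ≤ e δ) :
    IsSubadditive parent e := by
  intro γ F hF
  have hchildren : ∀ x, x ∈ (hcfin γ).toFinset ↔ parent x = some γ := fun x =>
    Set.Finite.mem_toFinset _
  calc ∑ c ∈ F, e c ≤ ∑ c ∈ (hcfin γ).toFinset, e c :=
        sum_le_sum_of_subset_of_nonneg (fun c hc => (hchildren c).2 (hF c hc))
          fun c _ _ => he0 c
    _ = ∑' δ' : {x : S // parent x = some γ}, e δ'.1 := by
        rw [← Finset.tsum_subtype]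
        exact (Equiv.subtypeEquivRight hchildren).tsum_eq fun x => e x.1
    _ ≤ e γ := hsub γ

theorem IsSubadditive.le_of_isAncestor (hsub : IsSubadditive parent e) {γ δ : S}
    (h : IsAncestor parent γ δ) : e δ ≤ e γ := by
  induction h with
  | refl => exact le_rfl
  | @tail δ c _ hparent ih =>
    exact le_trans (by simpa using hsub _ {c} (by simpa using hparent)) ih

end Subadditive

section ModifiedError

open Classical

variable {S : Type*} {parent : S → Option S} {e et : S → ℝ}

structure IsModifiedError (parent : S → Option S) (e et : S → ℝ) : Prop where
  of_parent_eq_none : ∀ δ : S, parent δ = none → et δ = e δ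
  of_parent_eq_some : ∀ δ δ' : S, parent δ = some δ' →
    et δ = if e δ + et δ' = 0 then 0 else e δ * et δ' / (e δ + et δ')

theorem IsModifiedError.pos (het : IsModifiedError parent e et)
    (hwf : WellFounded fun b a : S => parent a = some b) (hsub : IsSubadditive parent e)
    (δ : S) (hδ : 0 < e δ) : 0 < et δ := by
  induction δ using hwf.induction with
  | _ δ ih =>
    cases hp : parent δ with
    | none => rwa [het.of_parent_eq_none δ hp]
    | some p =>
      have hetp : 0 < et p :=
        ih p hp (hδ.trans_le (hsub.le_of_isAncestor (.single hp)))
      rw [het.of_parent_eq_some δ p hp, if_neg (add_pos hδ hetp).ne']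
      positivity

theorem IsModifiedError.inv_eq_sum_inv (het : IsModifiedError parent e et)
    (hwf : WellFounded fun b a : S => parent a = some b) (hsub : IsSubadditive parent e)
    {Λ : Finset S} (hΛ : IsTree parent ↑Λ) (δ : S) (hδΛ : δ ∈ Λ) (hδ : 0 < e δ) :
    (et δ)⁻¹ = ∑ γ ∈ Λ with IsAncestor parent γ δ, (e γ)⁻¹ := by
  induction δ using hwf.induction with
  | _ δ ih =>
    cases hp : parent δ with
    | none =>
      have hroot : {γ ∈ Λ | IsAncestor parent γ δ} = {δ} := by
        ext γ
        simp only [mem_filter, mem_singleton, isAncestor_iff_of_parent_eq_none hp]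
        exact ⟨And.right, fun h => ⟨h ▸ hδΛ, h⟩⟩
      rw [hroot, sum_singleton, het.of_parent_eq_none δ hp]
    | some p =>
      have hp' : 0 < e p := hδ.trans_le (hsub.le_of_isAncestor (.single hp))
      have hetp : 0 < et p := het.pos hwf hsub p hp'
      have hchain : {γ ∈ Λ | IsAncestor parent γ δ} = insert δ {γ ∈ Λ | IsAncestor parent γ p} := by
        ext γ
        simp only [mem_filter, mem_insert, isAncestor_iff_of_parent_eq_some hp]
        constructor
        · rintro ⟨hγ, rfl | h⟩ <;> tauto
        · rintro (rfl | ⟨hγ, h⟩) <;> tauto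
      have hδp : δ ∉ {γ ∈ Λ | IsAncestor parent γ p} := fun h =>
        not_isAncestor_of_parent_eq_some hwf hp (mem_filter.1 h).2
      rw [hchain, sum_insert hδp, ← ih p hp (hΛ.2 δ hδΛ p hp) hp',
        het.of_parent_eq_some δ p hp, if_neg (add_pos hδ hetp).ne']
      field_simp
      ring

theorem IsModifiedError.eq_mul_sum_div (het : IsModifiedError parent e et)
    (hwf : WellFounded fun b a : S => parent a = some b) (hsub : IsSubadditive parent e)
    (he0 : ∀ δ : S, 0 ≤ e δ) {Λ : Finset S} (hΛ : IsTree parent ↑Λ) {δ : S} (hδΛ : δ ∈ Λ) :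
    e δ = et δ * ∑ γ ∈ Λ with IsAncestor parent γ δ, e δ / e γ := by
  rcases (he0 δ).eq_or_lt with h | h
  · simp [← h]
  · simp_rw [div_eq_mul_inv, ← mul_sum, ← het.inv_eq_sum_inv hwf hsub hΛ δ hδΛ h]
    field_simp [(het.pos hwf hsub δ h).ne']

end ModifiedError

section Leaves

open Classical

variable {S : Type*} {parent : S → Option S} {e : S → ℝ}

theorem IsSubadditive.sum_leaves_le (hsub : IsSubadditive parent e) (he0 : ∀ δ : S, 0 ≤ e δ)
    (hwf : WellFounded fun b a : S => parent a = some b) {Λ : Finset S}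
    (hΛ : IsTree parent ↑Λ) (γ : S) :
    ∑ δ ∈ leaves parent Λ with IsAncestor parent γ δ, e δ ≤ e γ := by
  by_cases hleaf : ∀ c : S, parent c = some γ → c ∉ Λ
  · have hsingle : {δ ∈ leaves parent Λ | IsAncestor parent γ δ} ⊆ {γ} := by
      intro δ hδ
      obtain ⟨⟨hδΛ, -⟩, hγδ⟩ := (mem_filter.1 hδ).imp_left mem_leaves.1
      rcases hγδ.cases_head with rfl | ⟨c, hc, hcδ⟩
      · exact mem_singleton_self _
      · exact absurd (hΛ.mem_of_isAncestor hcδ hδΛ) (hleaf c hc)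
    calc _ ≤ ∑ δ ∈ {γ}, e δ := sum_le_sum_of_subset_of_nonneg hsingle fun δ _ _ => he0 δ
      _ = e γ := sum_singleton _ _
  · push Not at hleaf
    obtain ⟨c₀, hc₀, hc₀Λ⟩ := hleaf
    have hcover : {δ ∈ leaves parent Λ | IsAncestor parent γ δ} ⊆
        {c ∈ Λ | parent c = some γ}.biUnion
          fun c => {δ ∈ leaves parent Λ | IsAncestor parent c δ} := by
      intro δ hδ
      obtain ⟨⟨hδΛ, hδleaf⟩, hγδ⟩ := (mem_filter.1 hδ).imp_left mem_leaves.1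
      rcases hγδ.cases_head with rfl | ⟨c, hc, hcδ⟩
      · exact absurd hc₀Λ (hδleaf c₀ hc₀)
      · exact mem_biUnion.2 ⟨c, mem_filter.2 ⟨hΛ.mem_of_isAncestor hcδ hδΛ, hc⟩,
          mem_filter.2 ⟨mem_leaves.2 ⟨hδΛ, hδleaf⟩, hcδ⟩⟩
    calc _ ≤ ∑ δ ∈ {c ∈ Λ | parent c = some γ}.biUnion
            (fun c => {δ ∈ leaves parent Λ | IsAncestor parent c δ}), e δ :=
          sum_le_sum_of_subset_of_nonneg hcover fun δ _ _ => he0 δ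
      _ ≤ ∑ c ∈ Λ with parent c = some γ, ∑ δ ∈ leaves parent Λ with IsAncestor parent c δ, e δ :=
          sum_biUnion_le_sum_sum he0 _ _
      _ ≤ ∑ c ∈ Λ with parent c = some γ, e c :=
          sum_le_sum fun c _ => hsub.sum_leaves_le he0 hwf hΛ c
      _ ≤ e γ := hsub γ _ fun c hc => (mem_filter.1 hc).2
termination_by #{x ∈ Λ | IsAncestor parent γ x}
decreasing_by
  -- `γ` is its own descendant but not a descendant of its child `c`.
  obtain ⟨-, hc⟩ := mem_filter.1 ‹c ∈ {c ∈ Λ | parent c = some γ}›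
  refine card_lt_card ((ssubset_iff_of_subset fun x hx => ?_).2 ⟨γ, ?_, ?_⟩)
  · exact mem_filter.2 ⟨(mem_filter.1 hx).1, .head hc (mem_filter.1 hx).2⟩
  · exact mem_filter.2 ⟨hΛ.2 c₀ hc₀Λ γ hc₀, .refl⟩
  · exact fun h => not_isAncestor_of_parent_eq_some hwf hc (mem_filter.1 h).2

end Leaves

open Classical in
theorem stmt_9_general {S : Type*} (parent : S → Option S)
    (hwf : WellFounded fun b a : S => parent a = some b)
    (hcfin : ∀ δ : S, {δ' : S | parent δ' = some δ}.Finite)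
    (e et : S → ℝ) (he0 : ∀ δ : S, 0 ≤ e δ)
    (hsub : ∀ δ : S, ∑' δ' : {x : S // parent x = some δ}, e δ'.1 ≤ e δ)
    (hetroot : ∀ δ : S, parent δ = none → et δ = e δ)
    (hetrec : ∀ δ δ' : S, parent δ = some δ' →
      et δ = if e δ + et δ' = 0 then 0 else e δ * et δ' / (e δ + et δ'))
    (η : ℝ) (hη : 0 < η)
    (Λ : Finset S) (hΛ : IsTree parent ↑Λ)
    (hleaf : ∀ δ ∈ Λ.filter fun δ => ∀ δ' : S, parent δ' = some δ → δ' ∉ Λ,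
      et δ ≤ η) :
    ∑ δ ∈ Λ.filter (fun δ => ∀ δ' : S, parent δ' = some δ → δ' ∉ Λ), e δ ≤
      Λ.card * η := by
  have hsubadd : IsSubadditive parent e := isSubadditive_of_tsum_le hcfin he0 hsub
  have het : IsModifiedError parent e et := ⟨hetroot, hetrec⟩
  change ∑ δ ∈ leaves parent Λ, e δ ≤ _
  calc ∑ δ ∈ leaves parent Λ, e δ
      ≤ ∑ δ ∈ leaves parent Λ, η * ∑ γ ∈ Λ with IsAncestor parent γ δ, e δ / e γ :=
        sum_le_sum fun δ hδ =>
          (het.eq_mul_sum_div hwf hsubadd he0 hΛ (mem_leaves.1 hδ).1).trans_le <|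
            mul_le_mul_of_nonneg_right (hleaf δ hδ)
              (sum_nonneg fun γ _ => div_nonneg (he0 δ) (he0 γ))
    _ = η * ∑ γ ∈ Λ, (∑ δ ∈ leaves parent Λ with IsAncestor parent γ δ, e δ) / e γ := by
        simp_rw [← mul_sum, sum_div]
        congr 1
        exact sum_comm' fun δ γ => by simp only [mem_filter]; tauto
    _ ≤ η * ∑ γ ∈ Λ, (1 : ℝ) := by
        gcongr with γ
        exact div_le_one_of_le₀ (hsubadd.sum_leaves_le he0 hwf hΛ γ) (he0 γ)
    _ = #Λ * η := by rw [sum_const, nsmul_one, mul_comm]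

open Classical in
/-- Lemma A.1 (tree upper bound): if `ẽ(δ) ≤ η` for every leaf `δ` of a finite tree
`Λ`, then `Σ_{δ∈L(Λ)} e(δ) ≤ (#Λ)·η`. -/
theorem stmt_9 {S : Type*} [Countable S] (parent : S → Option S)
    (hwf : WellFounded fun b a : S => parent a = some b)
    (hrfin : {δ : S | parent δ = none}.Finite)
    (hrne : {δ : S | parent δ = none}.Nonempty)
    (hcfin : ∀ δ : S, {δ' : S | parent δ' = some δ}.Finite)
    (e et : S → ℝ) (he0 : ∀ δ : S, 0 ≤ e δ) (het0 : ∀ δ : S, 0 ≤ et δ)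
    (hsub : ∀ δ : S, ∑' δ' : {x : S // parent x = some δ}, e δ'.1 ≤ e δ)
    (hetroot : ∀ δ : S, parent δ = none → et δ = e δ)
    (hetrec : ∀ δ δ' : S, parent δ = some δ' →
      et δ = if e δ + et δ' = 0 then 0 else e δ * et δ' / (e δ + et δ'))
    (η : ℝ) (hη : 0 < η)
    (Λ : Finset S) (hΛ : IsTree parent ↑Λ)
    (hleaf : ∀ δ ∈ Λ.filter fun δ => ∀ δ' : S, parent δ' = some δ → δ' ∉ Λ,
      et δ ≤ η) :
    ∑ δ ∈ Λ.filter (fun δ => ∀ δ' : S, parent δ' = some δ → δ' ∉ Λ), e δ ≤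
      Λ.card * η :=
  stmt_9_general parent hwf hcfin e et he0 hsub hetroot hetrec η hη Λ hΛ hleaf
end

section
/- Let η > 0, let δ₀ ∈ S, and let Λ_{δ₀} be a finite subtree rooted at δ₀, i.e., a finite subset of S containing δ₀ such that every element of Λ_{δ₀} is a descendant of or equal to δ₀ and the parent of every element of Λ_{δ₀} other than δ₀ again lies in Λ_{δ₀}. If ẽ(δ) ≥ η for all δ ∈ Λ_{δ₀}, then e(δ₀) ≥ (#Λ_{δ₀})·η. -/
/-!
Write `g x = e x / η - e x / ẽ x`. For a child `c` of `x` the recursion for `ẽ` says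
`1 / ẽ c = 1 / e c + 1 / ẽ x`, so `g c + 1 = e c * (1 / η - 1 / ẽ x)`. Summing over the children of
`x` inside the subtree and using subadditivity of `e` together with `η ≤ ẽ x` gives
`∑ (g c + 1) ≤ g x`. Adding this up over all nodes of the subtree, every non-root node appears
exactly once as a child, so everything telescopes to `#Λ - 1 ≤ g δ₀`; finally `ẽ δ₀ ≤ e δ₀`
turns this into `#Λ ≤ e δ₀ / η`.
-/

open Finset

lemma Finset.sum_le_tsum_subtype_of_finite {S : Type*} {p : S → Prop} (hp : {x | p x}.Finite)
    {f : S → ℝ} (hf : ∀ x, 0 ≤ f x) {F : Finset S} (hF : ∀ x ∈ F, p x) :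
    ∑ x ∈ F, f x ≤ ∑' x : {x // p x}, f x := by
  classical
  have : Finite {x // p x} := hp.to_subtype
  rw [← sum_subtype_of_mem f hF]
  exact Summable.of_finite.sum_le_tsum _ fun x _ => hf x

lemma div_eq_div_add_one_of_eq_ite {a b t : ℝ} (hb : 0 < b) (ht : 0 < t)
    (h : t = if a + b = 0 then 0 else a * b / (a + b)) : a / t = a / b + 1 := by
  have hab : a + b ≠ 0 := fun hab => ht.ne' (by simp [h, hab])
  rw [if_neg hab] at h
  have ha : a ≠ 0 := by rintro rfl; simp [h] at ht
  rw [h]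
  field_simp

section Forest

variable {S : Type*} (parent : S → Option S)

lemma exists_parent_mem_of_ne_root [DecidableEq S] {Λ : Finset S} {δ₀ : S}
    (hdesc : ∀ δ ∈ Λ, Relation.ReflTransGen (fun a b : S => parent a = some b) δ δ₀)
    (hclosed : ∀ δ ∈ Λ, δ ≠ δ₀ → ∀ q : S, parent δ = some q → q ∈ Λ) :
    ∀ c ∈ Λ.erase δ₀, ∃ x ∈ Λ, parent c = some x := by
  intro c hc
  obtain ⟨hne, hcΛ⟩ := mem_erase.1 hc
  rcases (hdesc c hcΛ).cases_head with heq | ⟨x, hx, -⟩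
  · exact absurd heq hne
  · exact ⟨x, hclosed c hcΛ hne x hx, hx⟩

lemma sum_sum_children_eq_sum_erase [DecidableEq S] {M : Type*} [AddCommMonoid M]
    {Λ : Finset S} {δ₀ : S}
    (hparent : ∀ c ∈ Λ.erase δ₀, ∃ x ∈ Λ, parent c = some x) (f : S → M) :
    ∑ x ∈ Λ, ∑ c ∈ Λ.erase δ₀ with parent c = some x, f c = ∑ c ∈ Λ.erase δ₀, f c := by
  rw [← sum_fiberwise_of_maps_to (t := Λ.map .some) (g := parent) _ f, sum_map]
  · rfl
  · intro c hc
    obtain ⟨x, hx, hcx⟩ := hparent c hc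
    exact mem_map.2 ⟨x, hx, hcx.symm⟩

lemma card_erase_le_of_le_sum_children [DecidableEq S] {Λ : Finset S} {δ₀ : S} (hδ₀ : δ₀ ∈ Λ)
    (hparent : ∀ c ∈ Λ.erase δ₀, ∃ x ∈ Λ, parent c = some x) (g : S → ℝ)
    (hg : ∀ x ∈ Λ, ∑ c ∈ Λ.erase δ₀ with parent c = some x, (g c + 1) ≤ g x) :
    ((Λ.erase δ₀).card : ℝ) ≤ g δ₀ := by
  have htotal : ∑ c ∈ Λ.erase δ₀, (g c + 1) ≤ g δ₀ + ∑ c ∈ Λ.erase δ₀, g c := by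
    rw [← sum_sum_children_eq_sum_erase parent hparent, add_sum_erase Λ g hδ₀]
    exact sum_le_sum hg
  rw [sum_add_distrib, sum_const, nsmul_one] at htotal
  linarith

variable (e et : S → ℝ)

lemma et_le_e (he0 : ∀ δ, 0 ≤ e δ) (het0 : ∀ δ, 0 ≤ et δ)
    (hetroot : ∀ δ, parent δ = none → et δ = e δ)
    (hetrec : ∀ δ δ' : S, parent δ = some δ' →
      et δ = if e δ + et δ' = 0 then 0 else e δ * et δ' / (e δ + et δ'))
    (δ : S) : et δ ≤ e δ := by
  cases hp : parent δ with
  | none => exact (hetroot δ hp).le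
  | some p =>
    rw [hetrec δ p hp]
    split_ifs with h
    · exact he0 δ
    · have hpos : 0 < e δ + et p := lt_of_le_of_ne (add_nonneg (he0 δ) (het0 p)) (Ne.symm h)
      rw [div_le_iff₀ hpos]
      nlinarith [he0 δ]

lemma sum_children_surplus_le (he0 : ∀ δ, 0 ≤ e δ)
    (hetrec : ∀ δ δ' : S, parent δ = some δ' →
      et δ = if e δ + et δ' = 0 then 0 else e δ * et δ' / (e δ + et δ'))
    {η : ℝ} (hη : 0 < η) {x : S} (hx : η ≤ et x)
    (hcfin : {δ' : S | parent δ' = some x}.Finite)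
    (hsub : ∑' δ' : {y : S // parent y = some x}, e δ'.1 ≤ e x)
    {F : Finset S} (hF : ∀ c ∈ F, parent c = some x ∧ 0 < et c) :
    ∑ c ∈ F, (e c / η - e c / et c + 1) ≤ e x / η - e x / et x := by
  have hetx : 0 < et x := hη.trans_le hx
  have hchild : ∀ c ∈ F, e c / η - e c / et c + 1 = e c * (1 / η - 1 / et x) := by
    intro c hc
    rw [div_eq_div_add_one_of_eq_ite hetx (hF c hc).2 (hetrec c x (hF c hc).1)]
    ring
  have hsumF : ∑ c ∈ F, e c ≤ e x :=
    (sum_le_tsum_subtype_of_finite hcfin he0 fun c hc => (hF c hc).1).trans hsub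
  have hfactor : 0 ≤ 1 / η - 1 / et x := sub_nonneg.2 (one_div_le_one_div_of_le hη hx)
  calc ∑ c ∈ F, (e c / η - e c / et c + 1) = (∑ c ∈ F, e c) * (1 / η - 1 / et x) := by
        rw [sum_congr rfl hchild, sum_mul]
    _ ≤ e x * (1 / η - 1 / et x) := mul_le_mul_of_nonneg_right hsumF hfactor
    _ = e x / η - e x / et x := by ring

end Forest

open Classical in
theorem stmt_10_general {S : Type*} (parent : S → Option S)
    (hcfin : ∀ δ : S, {δ' : S | parent δ' = some δ}.Finite)
    (e et : S → ℝ) (he0 : ∀ δ : S, 0 ≤ e δ) (het0 : ∀ δ : S, 0 ≤ et δ)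
    (hsub : ∀ δ : S, ∑' δ' : {x : S // parent x = some δ}, e δ'.1 ≤ e δ)
    (hetroot : ∀ δ : S, parent δ = none → et δ = e δ)
    (hetrec : ∀ δ δ' : S, parent δ = some δ' →
      et δ = if e δ + et δ' = 0 then 0 else e δ * et δ' / (e δ + et δ'))
    (η : ℝ) (hη : 0 < η)
    (δ₀ : S) (Λ₀ : Finset S) (hmem : δ₀ ∈ Λ₀)
    (hdesc : ∀ δ ∈ Λ₀,
      Relation.ReflTransGen (fun a b : S => parent a = some b) δ δ₀)
    (hclosed : ∀ δ ∈ Λ₀, δ ≠ δ₀ → ∀ q : S, parent δ = some q → q ∈ Λ₀)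
    (hge : ∀ δ ∈ Λ₀, η ≤ et δ) :
    (Λ₀.card : ℝ) * η ≤ e δ₀ := by
  have hsurplus : ((Λ₀.erase δ₀).card : ℝ) ≤ e δ₀ / η - e δ₀ / et δ₀ := by
    refine card_erase_le_of_le_sum_children parent hmem
      (exists_parent_mem_of_ne_root parent hdesc hclosed)
      (fun x => e x / η - e x / et x) fun x hx => ?_
    refine sum_children_surplus_le parent e et he0 hetrec hη (hge x hx) (hcfin x) (hsub x) ?_
    intro c hc
    obtain ⟨hc, hcx⟩ := mem_filter.1 hc
    exact ⟨hcx, hη.trans_le (hge c (mem_of_mem_erase hc))⟩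
  have hratio : 1 ≤ e δ₀ / et δ₀ :=
    (one_le_div (hη.trans_le (hge δ₀ hmem))).2 (et_le_e parent e et he0 het0 hetroot hetrec δ₀)
  rw [card_erase_of_mem hmem, Nat.cast_sub (card_pos.2 ⟨δ₀, hmem⟩)] at hsurplus
  rw [← le_div_iff₀ hη]
  push_cast at hsurplus
  linarith

open Classical in
/-- Lemma A.2 (tree lower bound): if `Λ_{δ₀}` is a finite subtree rooted at `δ₀`
(every element is a descendant of or equal to `δ₀`, and the parent of every element
other than `δ₀` again lies in `Λ_{δ₀}`) and `ẽ(δ) ≥ η` for all `δ ∈ Λ_{δ₀}`, then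
`e(δ₀) ≥ (#Λ_{δ₀})·η`. -/
theorem stmt_10 {S : Type*} [Countable S] (parent : S → Option S)
    (hwf : WellFounded fun b a : S => parent a = some b)
    (hrfin : {δ : S | parent δ = none}.Finite)
    (hrne : {δ : S | parent δ = none}.Nonempty)
    (hcfin : ∀ δ : S, {δ' : S | parent δ' = some δ}.Finite)
    (e et : S → ℝ) (he0 : ∀ δ : S, 0 ≤ e δ) (het0 : ∀ δ : S, 0 ≤ et δ)
    (hsub : ∀ δ : S, ∑' δ' : {x : S // parent x = some δ}, e δ'.1 ≤ e δ)
    (hetroot : ∀ δ : S, parent δ = none → et δ = e δ)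
    (hetrec : ∀ δ δ' : S, parent δ = some δ' →
      et δ = if e δ + et δ' = 0 then 0 else e δ * et δ' / (e δ + et δ'))
    (η : ℝ) (hη : 0 < η)
    (δ₀ : S) (Λ₀ : Finset S) (hmem : δ₀ ∈ Λ₀)
    (hdesc : ∀ δ ∈ Λ₀,
      Relation.ReflTransGen (fun a b : S => parent a = some b) δ δ₀)
    (hclosed : ∀ δ ∈ Λ₀, δ ≠ δ₀ → ∀ q : S, parent δ = some q → q ∈ Λ₀)
    (hge : ∀ δ ∈ Λ₀, η ≤ et δ) :
    (Λ₀.card : ℝ) * η ≤ e δ₀ :=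
  stmt_10_general parent hcfin e et he0 het0 hsub hetroot hetrec η hη δ₀ Λ₀ hmem hdesc hclosed hge
end

section
/- Let β ∈ (0, ‖B‖^{−1/2}) and ω ∈ (0, κ(B)^{−1/2}(1 − ‖B‖β²)^{1/2}]. Let w ∈ H and let Λ₀ ⊆ 𝒥 be a finite set with supp w ⊆ Λ₀. Then for every finite set Λ̄ ⊆ 𝒥 for which there exists v ∈ H with supp v ⊆ Λ̄ and ‖u − v‖ ≤ β‖u − w‖_B, the set Λ := Λ₀ ∪ Λ̄ satisfies ‖(B w − f)|_Λ‖ ≥ ω‖B w − f‖. In particular, the smallest such Dörfler set Λ ⊇ Λ₀ satisfies #(Λ \ Λ₀) ≤ #Λ̄. -/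
open scoped RealInnerProductSpace

lemma le_of_sq_le_mul_self {t c : ℝ} (hc : 0 ≤ c) (h : t ^ 2 ≤ c * t) : t ≤ c := by
  nlinarith

lemma two_mul_sub_le_sq_div {T D E : ℝ} (hD : 0 ≤ D) (hT : T ^ 2 ≤ E * D) :
    2 * T - D ≤ T ^ 2 / D := by
  rcases hD.eq_or_lt with rfl | hD
  · rw [mul_zero] at hT
    simp [(sq_nonpos_iff T).1 hT]
  · rw [le_div_iff₀ hD]
    nlinarith [sq_nonneg (T - D)]

lemma sq_mul_le_of_le_inv_sqrt_mul_sqrt {ω K c : ℝ} (hω0 : 0 < ω) (hω : ω ≤ (√K)⁻¹ * √c) :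
    0 < K ∧ ω ^ 2 * K ≤ c := by
  have hK : 0 < K := by
    by_contra! hK
    rw [Real.sqrt_eq_zero'.2 hK, inv_zero, zero_mul] at hω
    linarith
  have hsK : 0 < √K := Real.sqrt_pos.2 hK
  have hωK : ω * √K ≤ √c := by rwa [← le_inv_mul_iff₀' hsK]
  have hc : 0 < c := Real.sqrt_pos.1 (lt_of_lt_of_le (by positivity) hωK)
  refine ⟨hK, ?_⟩
  rwa [Real.le_sqrt (by positivity) hc.le, mul_pow, Real.sq_sqrt hK.le] at hωK

namespace ContinuousLinearMap

variable {E : Type*} [NormedAddCommGroup E] [InnerProductSpace ℝ E] {A : E →L[ℝ] E}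

theorem IsPositive.inner_sq_le_s14 (hA : A.IsPositive) (x y : E) :
    ⟪A x, y⟫ ^ 2 ≤ ⟪A x, x⟫ * ⟪A y, y⟫ := by
  have h : ⟪A x, y⟫ * ⟪A y, x⟫ ≤ ⟪A x, x⟫ * ⟪A y, y⟫ :=
    LinearMap.BilinForm.apply_mul_apply_le_of_forall_zero_le
      ((innerₗ E).comp A.toLinearMap) hA.inner_nonneg_left x y
  rwa [hA.inner_left_eq_inner_right y x, real_inner_comm (A x) y, ← sq] at h

theorem inner_apply_self_le_opNorm_mul (A : E →L[ℝ] E) (x : E) : ⟪A x, x⟫ ≤ ‖A‖ * ‖x‖ ^ 2 :=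
  calc ⟪A x, x⟫ ≤ ‖A x‖ * ‖x‖ := real_inner_le_norm _ _
    _ ≤ ‖A‖ * ‖x‖ * ‖x‖ := by gcongr; exact A.le_opNorm x
    _ = ‖A‖ * ‖x‖ ^ 2 := by ring

theorem IsPositive.norm_apply_sq_le (hA : A.IsPositive) (x : E) :
    ‖A x‖ ^ 2 ≤ ‖A‖ * ⟪A x, x⟫ := by
  refine le_of_sq_le_mul_self (mul_nonneg (norm_nonneg A) (hA.inner_nonneg_left x)) ?_
  calc (‖A x‖ ^ 2) ^ 2 = ⟪A x, A x⟫ ^ 2 := by rw [real_inner_self_eq_norm_sq]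
    _ ≤ ⟪A x, x⟫ * ⟪A (A x), A x⟫ := hA.inner_sq_le_s14 x (A x)
    _ ≤ ⟪A x, x⟫ * (‖A‖ * ‖A x‖ ^ 2) := by
        gcongr
        · exact hA.inner_nonneg_left x
        · exact A.inner_apply_self_le_opNorm_mul (A x)
    _ = ‖A‖ * ⟪A x, x⟫ * ‖A x‖ ^ 2 := by ring

theorem IsPositive.norm_sq_le_of_rightInverse (hA : A.IsPositive) {A' : E →L[ℝ] E}
    (hA' : Function.RightInverse A' A) (x : E) : ‖x‖ ^ 2 ≤ ‖A'‖ * ⟪A x, x⟫ := by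
  refine le_of_sq_le_mul_self (mul_nonneg (norm_nonneg A') (hA.inner_nonneg_left x)) ?_
  calc (‖x‖ ^ 2) ^ 2 = ⟪A x, A' x⟫ ^ 2 := by
        rw [hA.inner_left_eq_inner_right, hA' x, real_inner_self_eq_norm_sq]
    _ ≤ ⟪A x, x⟫ * ⟪A (A' x), A' x⟫ := hA.inner_sq_le_s14 x (A' x)
    _ = ⟪A x, x⟫ * ⟪A' x, x⟫ := by rw [hA' x, real_inner_comm (A' x)]
    _ ≤ ⟪A x, x⟫ * (‖A'‖ * ‖x‖ ^ 2) := by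
        gcongr
        · exact hA.inner_nonneg_left x
        · exact A'.inner_apply_self_le_opNorm_mul x
    _ = ‖A'‖ * ⟪A x, x⟫ * ‖x‖ ^ 2 := by ring

theorem IsPositive.inner_apply_self_le_of_le_abs_inner (hA : A.IsPositive) {A' : E →L[ℝ] E}
    (hA' : Function.RightInverse A' A) {y z : E} (hz : ⟪A z, z⟫ ≤ |⟪y, z⟫|) :
    ⟪A z, z⟫ ≤ ‖A'‖ * ‖y‖ ^ 2 := by
  have hZ := hA.inner_nonneg_left z
  refine le_of_sq_le_mul_self (by positivity) ?_
  calc ⟪A z, z⟫ ^ 2 ≤ (‖y‖ * ‖z‖) ^ 2 := by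
        gcongr; exact hz.trans (abs_real_inner_le_norm y z)
    _ = ‖y‖ ^ 2 * ‖z‖ ^ 2 := by ring
    _ ≤ ‖y‖ ^ 2 * (‖A'‖ * ⟪A z, z⟫) := by gcongr; exact hA.norm_sq_le_of_rightInverse hA' z
    _ = ‖A'‖ * ‖y‖ ^ 2 * ⟪A z, z⟫ := by ring

/-- The `A`-orthogonal projection of `e` onto the line `ℝ ∙ d` (zero if `⟪A d, d⟫ = 0`). -/
noncomputable def energyProjLine (A : E →L[ℝ] E) (d e : E) : E :=
  (⟪A e, d⟫ / ⟪A d, d⟫) • d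

theorem inner_energyProjLine (A : E →L[ℝ] E) (d e : E) :
    ⟪A e, A.energyProjLine d e⟫ = ⟪A e, d⟫ ^ 2 / ⟪A d, d⟫ := by
  rw [energyProjLine, real_inner_smul_right]
  ring

theorem inner_energyProjLine_self (A : E →L[ℝ] E) (d e : E) :
    ⟪A (A.energyProjLine d e), A.energyProjLine d e⟫ = ⟪A e, d⟫ ^ 2 / ⟪A d, d⟫ := by
  rw [energyProjLine, map_smul, real_inner_smul_left, real_inner_smul_right]
  rcases eq_or_ne ⟪A d, d⟫ 0 with hD | hD
  · simp [hD]
  · field_simp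

theorem IsPositive.sub_le_inner_energyProjLine_self (hA : A.IsPositive) (d e : E) :
    ⟪A e, e⟫ - ⟪A (e - d), e - d⟫ ≤
      ⟪A (A.energyProjLine d e), A.energyProjLine d e⟫ := by
  have hexpand : ⟪A e, e⟫ - ⟪A (e - d), e - d⟫ = 2 * ⟪A e, d⟫ - ⟪A d, d⟫ := by
    simp only [map_sub, inner_sub_left, inner_sub_right, hA.inner_left_eq_inner_right d e,
      real_inner_comm (A e) d]
    ring
  rw [hexpand, inner_energyProjLine_self]
  exact two_mul_sub_le_sq_div (hA.inner_nonneg_left d) (hA.inner_sq_le_s14 e d)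

end ContinuousLinearMap

open ContinuousLinearMap

lemma inner_restr_left_of_forall_notMem {J : Type*} (Λ : Set J) (x z : lp (fun _ : J => ℝ) 2)
    (hz : ∀ i ∉ Λ, z i = 0) : ⟪restr Λ x, z⟫ = ⟪x, z⟫ := by
  rw [lp.inner_eq_tsum, lp.inner_eq_tsum]
  refine tsum_congr fun i => ?_
  by_cases h : i ∈ Λ
  · simp [restr, h]
  · simp [hz i h]

theorem dorfler_of_approx {J : Type*} {B Binv : lp (fun _ : J => ℝ) 2 →L[ℝ] lp (fun _ : J => ℝ) 2}
    (hB : B.IsPositive) (hBinv : Function.RightInverse Binv B) {f u v w : lp (fun _ : J => ℝ) 2}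
    (hu : B u = f) {Λ : Set J} (hv : ∀ i ∉ Λ, v i = 0) (hw : ∀ i ∉ Λ, w i = 0) {β ω : ℝ}
    (hω0 : 0 < ω) (hω : ω ≤ (√(‖B‖ * ‖Binv‖))⁻¹ * √(1 - ‖B‖ * β ^ 2))
    (huv : ‖u - v‖ ≤ β * √⟪B (u - w), u - w⟫) :
    ω * ‖B w - f‖ ≤ ‖restr Λ (B w - f)‖ := by
  set e := u - w
  set z := B.energyProjLine (v - w) e
  have hr : B w - f = -B e := by rw [← hu, map_sub, neg_sub]
  have hE : 0 ≤ ⟪B e, e⟫ := hB.inner_nonneg_left e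
  have hres : ‖B w - f‖ ^ 2 ≤ ‖B‖ * ⟪B e, e⟫ := by
    rw [hr, norm_neg]
    exact hB.norm_apply_sq_le e
  have hnear : ⟪B (e - (v - w)), e - (v - w)⟫ ≤ ‖B‖ * β ^ 2 * ⟪B e, e⟫ :=
    calc ⟪B (e - (v - w)), e - (v - w)⟫ ≤ ‖B‖ * ‖u - v‖ ^ 2 := by
          rw [show e - (v - w) = u - v from sub_sub_sub_cancel_right u v w]
          exact B.inner_apply_self_le_opNorm_mul (u - v)
      _ ≤ ‖B‖ * (β * √⟪B e, e⟫) ^ 2 := by gcongr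
      _ = ‖B‖ * β ^ 2 * ⟪B e, e⟫ := by rw [mul_pow, Real.sq_sqrt hE]; ring
  have hz : (1 - ‖B‖ * β ^ 2) * ⟪B e, e⟫ ≤ ⟪B z, z⟫ := by
    linarith [hB.sub_le_inner_energyProjLine_self (v - w) e]
  have hzΛ : ∀ i ∉ Λ, z i = 0 := fun i hi => by
    simp only [z, energyProjLine, lp.coeFn_smul, lp.coeFn_sub, Pi.smul_apply, Pi.sub_apply,
      hv i hi, hw i hi, sub_zero, smul_zero]
  have hzr : ⟪B z, z⟫ ≤ ‖Binv‖ * ‖restr Λ (B w - f)‖ ^ 2 := by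
    refine hB.inner_apply_self_le_of_le_abs_inner hBinv (le_of_eq ?_)
    rw [inner_restr_left_of_forall_notMem Λ _ z hzΛ, hr, inner_neg_left, abs_neg,
      inner_energyProjLine, inner_energyProjLine_self, abs_of_nonneg]
    exact div_nonneg (sq_nonneg _) (hB.inner_nonneg_left _)
  obtain ⟨hK, hωK⟩ := sq_mul_le_of_le_inv_sqrt_mul_sqrt hω0 hω
  have hBinv0 : 0 < ‖Binv‖ := pos_of_mul_pos_right hK (norm_nonneg _)
  refine (sq_le_sq₀ (by positivity) (norm_nonneg _)).1 (le_of_mul_le_mul_right ?_ hBinv0)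
  calc (ω * ‖B w - f‖) ^ 2 * ‖Binv‖ = ω ^ 2 * ‖Binv‖ * ‖B w - f‖ ^ 2 := by ring
    _ ≤ ω ^ 2 * ‖Binv‖ * (‖B‖ * ⟪B e, e⟫) := by gcongr
    _ = ω ^ 2 * (‖B‖ * ‖Binv‖) * ⟪B e, e⟫ := by ring
    _ ≤ (1 - ‖B‖ * β ^ 2) * ⟪B e, e⟫ := by gcongr
    _ ≤ ‖Binv‖ * ‖restr Λ (B w - f)‖ ^ 2 := hz.trans hzr
    _ = ‖restr Λ (B w - f)‖ ^ 2 * ‖Binv‖ := mul_comm _ _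

lemma card_union_sdiff_left_le {α : Type*} [DecidableEq α] (s t : Finset α) :
    ((s ∪ t) \ s).card ≤ t.card := by
  rw [Finset.union_sdiff_left]
  exact Finset.card_le_card Finset.sdiff_subset

lemma card_sdiff_le_of_minimal {α : Type*} [DecidableEq α] {P : Finset α → Prop}
    {Λ₀ Λbar Λ : Finset α} (hP : P (Λ₀ ∪ Λbar)) (hΛ : Λ₀ ⊆ Λ)
    (hmin : ∀ Λ', Λ₀ ⊆ Λ' → P Λ' → Λ.card ≤ Λ'.card) : (Λ \ Λ₀).card ≤ Λbar.card :=
  calc (Λ \ Λ₀).card = Λ.card - Λ₀.card := Finset.card_sdiff_of_subset hΛ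
    _ ≤ (Λ₀ ∪ Λbar).card - Λ₀.card := Nat.sub_le_sub_right (hmin _ Finset.subset_union_left hP) _
    _ = ((Λ₀ ∪ Λbar) \ Λ₀).card := (Finset.card_sdiff_of_subset Finset.subset_union_left).symm
    _ ≤ Λbar.card := card_union_sdiff_left_le Λ₀ Λbar

theorem stmt_14_general {J : Type*} [DecidableEq J]
    (B Binv : lp (fun _ : J => ℝ) 2 →L[ℝ] lp (fun _ : J => ℝ) 2)
    (rB RB : ℝ) (hrB : 0 < rB)
    (hsa : ∀ x y, ⟪B x, y⟫ = ⟪x, B y⟫)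
    (hell : ∀ v, rB * ‖v‖ ^ 2 ≤ ⟪B v, v⟫ ∧ ⟪B v, v⟫ ≤ RB * ‖v‖ ^ 2)
    (hinv2 : B.comp Binv = ContinuousLinearMap.id ℝ _)
    (f u : lp (fun _ : J => ℝ) 2) (hu : B u = f)
    (β ω : ℝ)
    (hω0 : 0 < ω)
    (hω : ω ≤ (Real.sqrt (‖B‖ * ‖Binv‖))⁻¹ * Real.sqrt (1 - ‖B‖ * β ^ 2))
    (w : lp (fun _ : J => ℝ) 2) (Λ₀ : Finset J)
    (hwsupp : ∀ i : J, i ∉ Λ₀ → w i = 0) :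
    ∀ Λbar : Finset J,
      (∃ v : lp (fun _ : J => ℝ) 2, (∀ i : J, i ∉ Λbar → v i = 0) ∧
          ‖u - v‖ ≤ β * Real.sqrt ⟪B (u - w), u - w⟫) →
      (ω * ‖B w - f‖ ≤ ‖restr (↑(Λ₀ ∪ Λbar)) (B w - f)‖ ∧
        ((Λ₀ ∪ Λbar) \ Λ₀).card ≤ Λbar.card) ∧
      ∀ Λ : Finset J, Λ₀ ⊆ Λ →
        ω * ‖B w - f‖ ≤ ‖restr (↑Λ) (B w - f)‖ →
        (∀ Λ' : Finset J, Λ₀ ⊆ Λ' →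
            ω * ‖B w - f‖ ≤ ‖restr (↑Λ') (B w - f)‖ → Λ.card ≤ Λ'.card) →
        (Λ \ Λ₀).card ≤ Λbar.card := by
  rintro Λbar ⟨v, hv, huv⟩
  have hB : B.IsPositive :=
    (isPositive_iff B).2 ⟨hsa, fun x => (mul_nonneg hrB.le (sq_nonneg _)).trans (hell x).1⟩
  have hBinv : Function.RightInverse Binv B := fun y => congr($hinv2 y)
  have hdorf : ω * ‖B w - f‖ ≤ ‖restr (↑(Λ₀ ∪ Λbar)) (B w - f)‖ :=
    dorfler_of_approx hB hBinv hu (fun i hi => hv i fun h => hi (by simp [h]))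
      (fun i hi => hwsupp i fun h => hi (by simp [h])) hω0 hω huv
  exact ⟨⟨hdorf, card_union_sdiff_left_le Λ₀ Λbar⟩,
    fun Λ hΛ _ hmin => card_sdiff_le_of_minimal hdorf hΛ hmin⟩

/-- Lemma 5.2 of the paper.  With `B` bounded, self-adjoint and elliptic on `H = ℓ²(𝒥)`,
boundedly invertible with inverse `Binv`, `κ(B) = ‖B‖·‖B⁻¹‖`, and `u = B⁻¹f`:
let `β ∈ (0, ‖B‖^{−1/2})`, `ω ∈ (0, κ(B)^{−1/2}(1 − ‖B‖β²)^{1/2}]`, `w ∈ H`, and let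
`Λ₀` be finite with `supp w ⊆ Λ₀`.  Then for every finite `Λ̄` admitting `v` with
`supp v ⊆ Λ̄` and `‖u − v‖ ≤ β‖u − w‖_B`, the set `Λ = Λ₀ ∪ Λ̄` satisfies the Dörfler
property `‖(Bw − f)|_Λ‖ ≥ ω‖Bw − f‖` and `#(Λ \ Λ₀) ≤ #Λ̄`; in particular any smallest
Dörfler set `Λ ⊇ Λ₀` satisfies `#(Λ \ Λ₀) ≤ #Λ̄`. -/
theorem stmt_14 {J : Type*} [Countable J] [DecidableEq J]
    (B Binv : lp (fun _ : J => ℝ) 2 →L[ℝ] lp (fun _ : J => ℝ) 2)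
    (rB RB : ℝ) (hrB : 0 < rB) (hrRB : rB ≤ RB)
    (hsa : ∀ x y, ⟪B x, y⟫ = ⟪x, B y⟫)
    (hell : ∀ v, rB * ‖v‖ ^ 2 ≤ ⟪B v, v⟫ ∧ ⟪B v, v⟫ ≤ RB * ‖v‖ ^ 2)
    (hinv1 : Binv.comp B = ContinuousLinearMap.id ℝ _)
    (hinv2 : B.comp Binv = ContinuousLinearMap.id ℝ _)
    (f u : lp (fun _ : J => ℝ) 2) (hu : B u = f)
    (β ω : ℝ) (hβ0 : 0 < β) (hβ : β < (Real.sqrt ‖B‖)⁻¹)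
    (hω0 : 0 < ω)
    (hω : ω ≤ (Real.sqrt (‖B‖ * ‖Binv‖))⁻¹ * Real.sqrt (1 - ‖B‖ * β ^ 2))
    (w : lp (fun _ : J => ℝ) 2) (Λ₀ : Finset J)
    (hwsupp : ∀ i : J, i ∉ Λ₀ → w i = 0) :
    ∀ Λbar : Finset J,
      (∃ v : lp (fun _ : J => ℝ) 2, (∀ i : J, i ∉ Λbar → v i = 0) ∧
          ‖u - v‖ ≤ β * Real.sqrt ⟪B (u - w), u - w⟫) →
      (ω * ‖B w - f‖ ≤ ‖restr (↑(Λ₀ ∪ Λbar)) (B w - f)‖ ∧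
        ((Λ₀ ∪ Λbar) \ Λ₀).card ≤ Λbar.card) ∧
      ∀ Λ : Finset J, Λ₀ ⊆ Λ →
        ω * ‖B w - f‖ ≤ ‖restr (↑Λ) (B w - f)‖ →
        (∀ Λ' : Finset J, Λ₀ ⊆ Λ' →
            ω * ‖B w - f‖ ≤ ‖restr (↑Λ') (B w - f)‖ → Λ.card ≤ Λ'.card) →
        (Λ \ Λ₀).card ≤ Λbar.card :=
  stmt_14_general B Binv rB RB hrB hsa hell hinv2 f u hu β ω hω0 hω w Λ₀ hwsupp
end

section
/- Let g, r ∈ H, Λ ⊆ 𝒥, ζ ∈ [0, 1/2) and ω₁ ∈ (0,1), and set ω̂ = (ω₁(1−ζ)+ζ)/(1−2ζ). If ‖r − g‖ ≤ ζ‖g‖ and ‖g|_Λ‖ ≥ ω̂‖g‖, then ‖r|_Λ‖ ≥ ω₁‖r‖. -/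
open Classical in
lemma restr_apply {J : Type*} (Λ : Set J) (v : lp (fun _ : J => ℝ) 2) (i : J) :
    restr Λ v i = if i ∈ Λ then v i else 0 := rfl

lemma restr_sub {J : Type*} (Λ : Set J) (a b : lp (fun _ : J => ℝ) 2) :
    restr Λ (a - b) = restr Λ a - restr Λ b := by
  ext i
  simp only [restr_apply, lp.coeFn_sub, Pi.sub_apply]
  split_ifs <;> simp

lemma norm_restr_le {J : Type*} (Λ : Set J) (v : lp (fun _ : J => ℝ) 2) :
    ‖restr Λ v‖ ≤ ‖v‖ := by
  have hp : (0 : ℝ) < (2 : ENNReal).toReal := by norm_num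
  refine lp.norm_le_of_tsum_le hp (norm_nonneg _) ?_
  rw [lp.norm_rpow_eq_tsum hp]
  refine Summable.tsum_le_tsum (fun i => ?_) ((lp.memℓp _).summable hp) ((lp.memℓp v).summable hp)
  rw [restr_apply]
  split_ifs
  · exact le_rfl
  · rw [norm_zero, Real.zero_rpow (by norm_num)]
    positivity

lemma lipschitzWith_one_restr {J : Type*} (Λ : Set J) : LipschitzWith 1 (restr Λ) :=
  LipschitzWith.of_dist_le_mul fun a b => by
    simpa only [NNReal.coe_one, one_mul, dist_eq_norm, ← restr_sub] using norm_restr_le Λ (a - b)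

lemma LipschitzWith.norm_sub_norm_le_norm_sub {E F : Type*} [SeminormedAddCommGroup E]
    [SeminormedAddCommGroup F] {f : E → F} (hf : LipschitzWith 1 f) (x y : E) :
    ‖f x‖ - ‖f y‖ ≤ ‖x - y‖ := by
  simpa only [NNReal.coe_one, one_mul] using (norm_sub_norm_le _ _).trans (hf.norm_sub_le x y)

lemma mul_one_add_le_div_sub {ω ζ : ℝ} (hω : 0 ≤ ω) (hd : 0 < 1 - 2 * ζ) :
    ω * (1 + ζ) ≤ (ω * (1 - ζ) + ζ) / (1 - 2 * ζ) - ζ := by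
  rw [le_sub_iff_add_le, le_div_iff₀ hd]
  nlinarith [mul_nonneg (add_nonneg zero_le_one hω) (sq_nonneg ζ)]

theorem stmt_16_general {J : Type*}
    (g r : lp (fun _ : J => ℝ) 2) (Λ : Set J) (ζ ω₁ : ℝ)
    (hζ : ζ < 1 / 2) (hω₁0 : 0 < ω₁)
    (h1 : ‖r - g‖ ≤ ζ * ‖g‖)
    (h2 : (ω₁ * (1 - ζ) + ζ) / (1 - 2 * ζ) * ‖g‖ ≤ ‖restr Λ g‖) :
    ω₁ * ‖r‖ ≤ ‖restr Λ r‖ := by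
  have hd : 0 < 1 - 2 * ζ := by linarith
  have hr : ‖r‖ ≤ (1 + ζ) * ‖g‖ := by
    linarith [norm_le_norm_add_norm_sub' r g]
  calc ω₁ * ‖r‖ ≤ ω₁ * (1 + ζ) * ‖g‖ := by
        rw [mul_assoc]; exact mul_le_mul_of_nonneg_left hr hω₁0.le
    _ ≤ ((ω₁ * (1 - ζ) + ζ) / (1 - 2 * ζ) - ζ) * ‖g‖ :=
        mul_le_mul_of_nonneg_right (mul_one_add_le_div_sub hω₁0.le hd) (norm_nonneg g)
    _ ≤ ‖restr Λ g‖ - ‖r - g‖ := by linarith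
    _ ≤ ‖restr Λ r‖ := by
        linarith [lipschitzWith_one_restr Λ |>.norm_sub_norm_le_norm_sub g r, norm_sub_rev r g]

/-- Let `g, r ∈ H = ℓ²(𝒥)`, `Λ ⊆ 𝒥`, `ζ ∈ [0, 1/2)` and `ω₁ ∈ (0,1)`, and set
`ω̂ = (ω₁(1−ζ)+ζ)/(1−2ζ)`. If `‖r − g‖ ≤ ζ‖g‖` and `‖g|_Λ‖ ≥ ω̂‖g‖`,
then `‖r|_Λ‖ ≥ ω₁‖r‖`. -/
theorem stmt_16 {J : Type*} [Countable J]
    (g r : lp (fun _ : J => ℝ) 2) (Λ : Set J) (ζ ω₁ : ℝ)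
    (hζ0 : 0 ≤ ζ) (hζ : ζ < 1 / 2) (hω₁0 : 0 < ω₁) (hω₁1 : ω₁ < 1)
    (h1 : ‖r - g‖ ≤ ζ * ‖g‖)
    (h2 : (ω₁ * (1 - ζ) + ζ) / (1 - 2 * ζ) * ‖g‖ ≤ ‖restr Λ g‖) :
    ω₁ * ‖r‖ ≤ ‖restr Λ r‖ :=
  stmt_16_general g r Λ ζ ω₁ hζ hω₁0 h1 h2
end

section
/- One step of the inexact adaptive Galerkin iteration is a contraction in the energy norm: Let ζ ≥ 0 and ω₀ ∈ (0,1] with (1−ζ)ω₀ − ζ > 0, and let γ ≥ 0. Let w ∈ H, let r ∈ H satisfy ‖r − (B w − f)‖ ≤ ζ‖B w − f‖, let Λ' ⊆ 𝒥 be a finite set with supp w ⊆ Λ' and ‖r|_{Λ'}‖ ≥ ω₀‖r‖, and let u' ∈ H satisfy supp u' ⊆ Λ' and ‖(B u' − f)|_{Λ'}‖ ≤ γ‖r‖. Then ‖u − u'‖_B ≤ ρ‖u − w‖_B with ρ = (1 − ((1−ζ)ω₀ − ζ)²·κ(B)^{−1} + γ²(1+ζ)²·κ(B))^{1/2}. 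-/
/-!
Let `g` be the exact Galerkin solution on `V = ℓ²(Λ')`, which exists by Lax–Milgram. Galerkin
orthogonality splits the energy errors: `‖u - w‖²_B = ‖u - g‖²_B + ‖g - w‖²_B`, and likewise for
`u'`. Since `r` is `ζ`-close to the residual, the bulk criterion gives
`((1 - ζ)ω₀ - ζ)‖Bw - f‖ ≤ ‖(Bw - f)|_Λ'‖ ≤ ‖B(g - w)‖`, so passing from `w` to `g` removes at
least the fraction `((1 - ζ)ω₀ - ζ)² κ(B)⁻¹` of `‖u - w‖²_B`; replacing `g` by `u'` adds at most
`‖B⁻¹‖ ‖(Bu' - f)|_Λ'‖² ≤ γ²(1 + ζ)² κ(B) ‖u - w‖²_B`. Restriction to `Λ'` is the orthogonal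
projection onto the closed subspace of sequences supported in `Λ'`, so the argument runs in any
real Hilbert space with a complete subspace `V`.
-/

open scoped RealInnerProductSpace

theorem le_of_mul_self_le_mul {a b : ℝ} (hb : 0 ≤ b) (h : a * a ≤ a * b) : a ≤ b := by
  nlinarith

section Energy

variable {E : Type*} [NormedAddCommGroup E] [InnerProductSpace ℝ E]

namespace ContinuousLinearMap

theorem IsPositive.inner_map_sq_le {B : E →L[ℝ] E} (hB : B.IsPositive) (x y : E) :
    ⟪B x, y⟫ ^ 2 ≤ ⟪B x, x⟫ * ⟪B y, y⟫ := by
  have h := LinearMap.BilinForm.apply_mul_apply_le_of_forall_zero_le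
    ((innerₗ E).comp (B : E →ₗ[ℝ] E)) hB.inner_nonneg_left x y
  simp only [LinearMap.comp_apply, coe_coe, innerₗ_apply_apply] at h
  rwa [hB.inner_left_eq_inner_right y, real_inner_comm (B x) y, ← sq] at h

theorem IsPositive.norm_map_sq_le {B : E →L[ℝ] E} (hB : B.IsPositive) (z : E) :
    ‖B z‖ ^ 2 ≤ ‖B‖ * ⟪B z, z⟫ := by
  refine le_of_mul_self_le_mul (mul_nonneg (norm_nonneg B) (hB.inner_nonneg_left z)) ?_
  have hCS := hB.inner_map_sq_le z (B z)
  have hBBz : ⟪B (B z), B z⟫ ≤ ‖B‖ * ‖B z‖ ^ 2 := by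
    calc ⟪B (B z), B z⟫ ≤ ‖B (B z)‖ * ‖B z‖ := real_inner_le_norm _ _
      _ ≤ ‖B‖ * ‖B z‖ * ‖B z‖ := by gcongr; exact B.le_opNorm _
      _ = ‖B‖ * ‖B z‖ ^ 2 := by ring
  rw [real_inner_self_eq_norm_sq] at hCS
  nlinarith [mul_le_mul_of_nonneg_left hBBz (hB.inner_nonneg_left z)]

theorem IsPositive.norm_sq_le_of_rightInverse_s17 {B Binv : E →L[ℝ] E} (hB : B.IsPositive)
    (hinv : Function.RightInverse Binv B) (z : E) :
    ‖z‖ ^ 2 ≤ ‖Binv‖ * ⟪B z, z⟫ := by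
  refine le_of_mul_self_le_mul (mul_nonneg (norm_nonneg Binv) (hB.inner_nonneg_left z)) ?_
  have hCS := hB.inner_map_sq_le (Binv z) z
  have hBinv : ⟪z, Binv z⟫ ≤ ‖Binv‖ * ‖z‖ ^ 2 := by
    calc ⟪z, Binv z⟫ ≤ ‖z‖ * ‖Binv z‖ := real_inner_le_norm _ _
      _ ≤ ‖z‖ * (‖Binv‖ * ‖z‖) := by gcongr; exact Binv.le_opNorm _
      _ = ‖Binv‖ * ‖z‖ ^ 2 := by ring
  rw [hinv z, real_inner_self_eq_norm_sq] at hCS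
  nlinarith [mul_le_mul_of_nonneg_right hBinv (hB.inner_nonneg_left z)]

theorem inner_map_self_le_of_leftInverse_s17 {B Binv : E →L[ℝ] E}
    (hinv : Function.LeftInverse Binv B) (z : E) :
    ⟪B z, z⟫ ≤ ‖Binv‖ * ‖B z‖ ^ 2 :=
  calc ⟪B z, z⟫ ≤ ‖B z‖ * ‖Binv (B z)‖ := by rw [hinv z]; exact real_inner_le_norm _ _
    _ ≤ ‖B z‖ * (‖Binv‖ * ‖B z‖) := by gcongr; exact Binv.le_opNorm _
    _ = ‖Binv‖ * ‖B z‖ ^ 2 := by ring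

theorem inner_map_add_self_of_inner_eq_zero {B : E →L[ℝ] E}
    (hB : (B : E →ₗ[ℝ] E).IsSymmetric) {a b : E} (hab : ⟪B a, b⟫ = 0) :
    ⟪B (a + b), a + b⟫ = ⟪B a, a⟫ + ⟪B b, b⟫ := by
  have hba : ⟪B b, a⟫ = 0 := (hB b a).trans ((real_inner_comm _ _).trans hab)
  simp only [map_add, inner_add_left, inner_add_right, hab, hba]
  ring

end ContinuousLinearMap

open ContinuousLinearMap

namespace Submodule

variable (V : Submodule ℝ E)

theorem exists_mem_map_sub_mem_orthogonal [CompleteSpace V] {B : E →L[ℝ] E} {c : ℝ} (hc : 0 < c)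
    (hcoer : ∀ v, c * ‖v‖ ^ 2 ≤ ⟪B v, v⟫) (f : E) :
    ∃ g ∈ V, B g - f ∈ Vᗮ := by
  set b : V →L[ℝ] V →L[ℝ] ℝ :=
    (innerSL ℝ (E := E) : E →L[ℝ] E →L[ℝ] ℝ).bilinearComp (B.comp V.subtypeL) V.subtypeL
  have hb : IsCoercive b := ⟨c, hc, fun v => by simpa [b, sq, mul_assoc] using hcoer v⟩
  refine ⟨hb.continuousLinearEquivOfBilin.symm (V.orthogonalProjectionOnto f), coe_mem _, ?_⟩
  intro v hv
  have h := hb.continuousLinearEquivOfBilin_apply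
    (hb.continuousLinearEquivOfBilin.symm (V.orthogonalProjectionOnto f)) ⟨v, hv⟩
  rw [ContinuousLinearEquiv.apply_symm_apply, inner_orthogonalProjectionOnto_eq_of_mem_right] at h
  simp [b] at h
  rw [inner_sub_right, real_inner_comm _ v, real_inner_comm f v, ← h, sub_self]

theorem mul_norm_le_norm_starProjection [V.HasOrthogonalProjection] {ζ ω₀ : ℝ} (hω₀ : 0 ≤ ω₀)
    {e r : E} (hr : ‖r - e‖ ≤ ζ * ‖e‖) (hbulk : ω₀ * ‖r‖ ≤ ‖V.starProjection r‖) :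
    ((1 - ζ) * ω₀ - ζ) * ‖e‖ ≤ ‖V.starProjection e‖ := by
  have hre : (1 - ζ) * ‖e‖ ≤ ‖r‖ := by
    linarith [norm_sub_norm_le e r, norm_sub_rev e r]
  have hPr : ‖V.starProjection r‖ ≤ ‖V.starProjection e‖ + ζ * ‖e‖ :=
    calc ‖V.starProjection r‖ = ‖V.starProjection e + V.starProjection (r - e)‖ := by
          rw [map_sub, add_sub_cancel]
      _ ≤ ‖V.starProjection e‖ + ‖V.starProjection (r - e)‖ := norm_add_le _ _
      _ ≤ ‖V.starProjection e‖ + ζ * ‖e‖ := by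
          gcongr; exact (V.norm_starProjection_apply_le _).trans hr
  nlinarith [mul_le_mul_of_nonneg_left hre hω₀]

variable [V.HasOrthogonalProjection] {B : E →L[ℝ] E} {f g : E}

theorem norm_starProjection_map_sub_le (hgf : B g - f ∈ Vᗮ) (w : E) :
    ‖V.starProjection (B w - f)‖ ≤ ‖B (g - w)‖ :=
  calc ‖V.starProjection (B w - f)‖
        = ‖V.starProjection (B (w - g)) + V.starProjection (B g - f)‖ := by
          rw [← map_add, map_sub B w g, sub_add_sub_cancel]
    _ = ‖V.starProjection (B (w - g))‖ := by
          rw [V.starProjection_apply_eq_zero_iff.mpr hgf, add_zero]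
    _ ≤ ‖B (w - g)‖ := V.norm_starProjection_apply_le _
    _ = ‖B (g - w)‖ := by rw [map_sub, map_sub, norm_sub_rev]

theorem inner_map_sub_self_le_norm_starProjection_sq (hgf : B g - f ∈ Vᗮ) {Binv : E →L[ℝ] E}
    (hB : B.IsPositive) (hinv : Function.RightInverse Binv B) (hg : g ∈ V) {u' : E}
    (hu' : u' ∈ V) :
    ⟪B (g - u'), g - u'⟫ ≤ ‖Binv‖ * ‖V.starProjection (B u' - f)‖ ^ 2 := by
  set z := g - u'
  set ρ := ‖V.starProjection (B u' - f)‖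
  have hz : z ∈ V := V.sub_mem hg hu'
  have hQ : ⟪B z, z⟫ ≤ ρ * ‖z‖ :=
    calc ⟪B z, z⟫ = ⟪B g - f, z⟫ - ⟪V.starProjection (B u' - f), z⟫ := by
          rw [V.inner_starProjection_left_eq_right, V.starProjection_eq_self_iff.mpr hz,
            ← inner_sub_left, sub_sub_sub_cancel_right, ← map_sub]
      _ = -⟪V.starProjection (B u' - f), z⟫ := by
          rw [V.inner_left_of_mem_orthogonal hz hgf, zero_sub]
      _ ≤ ρ * ‖z‖ := (neg_le_abs _).trans (abs_real_inner_le_norm _ _)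
  have hQ0 := hB.inner_nonneg_left z
  refine le_of_mul_self_le_mul (by positivity) ?_
  nlinarith [mul_le_mul_of_nonneg_left (hB.norm_sq_le_of_rightInverse_s17 hinv z) (sq_nonneg ρ),
    mul_le_mul hQ hQ hQ0 (hQ0.trans hQ)]

theorem sq_mul_inner_map_sub_self_le_of_bulk (hgf : B g - f ∈ Vᗮ) {Binv : E →L[ℝ] E}
    (hB : B.IsPositive) (hinv : Function.LeftInverse Binv B) {u : E} (hu : B u = f)
    {ζ ω₀ : ℝ} (hω₀ : 0 ≤ ω₀) (hη : 0 ≤ (1 - ζ) * ω₀ - ζ) {w r : E}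
    (hr : ‖r - (B w - f)‖ ≤ ζ * ‖B w - f‖) (hbulk : ω₀ * ‖r‖ ≤ ‖V.starProjection r‖) :
    ((1 - ζ) * ω₀ - ζ) ^ 2 * ⟪B (u - w), u - w⟫ ≤ (‖B‖ * ‖Binv‖) * ⟪B (g - w), g - w⟫ := by
  set η := (1 - ζ) * ω₀ - ζ
  set N := ‖B w - f‖
  have hNuw : ‖B (u - w)‖ = N := by rw [map_sub, hu, norm_sub_rev]
  have hηN : η * N ≤ ‖B (g - w)‖ :=
    (V.mul_norm_le_norm_starProjection hω₀ hr hbulk).trans (V.norm_starProjection_map_sub_le hgf w)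
  calc η ^ 2 * ⟪B (u - w), u - w⟫ ≤ η ^ 2 * (‖Binv‖ * N ^ 2) := by
        gcongr; rw [← hNuw]; exact inner_map_self_le_of_leftInverse_s17 hinv _
    _ = ‖Binv‖ * (η * N) ^ 2 := by ring
    _ ≤ ‖Binv‖ * ‖B (g - w)‖ ^ 2 := by gcongr
    _ ≤ ‖Binv‖ * (‖B‖ * ⟪B (g - w), g - w⟫) := by gcongr; exact hB.norm_map_sq_le _
    _ = (‖B‖ * ‖Binv‖) * ⟪B (g - w), g - w⟫ := by ring

end Submodule

theorem galerkin_step_energy_le (V : Submodule ℝ E) [CompleteSpace V] {B Binv : E →L[ℝ] E}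
    (hB : B.IsPositive) {c : ℝ} (hc : 0 < c) (hcoer : ∀ v, c * ‖v‖ ^ 2 ≤ ⟪B v, v⟫)
    (hleft : Function.LeftInverse Binv B) (hright : Function.RightInverse Binv B)
    {f u : E} (hu : B u = f) {ζ ω₀ γ : ℝ} (hω₀ : 0 ≤ ω₀) (hη : 0 ≤ (1 - ζ) * ω₀ - ζ)
    {w r u' : E} (hr : ‖r - (B w - f)‖ ≤ ζ * ‖B w - f‖) (hw : w ∈ V)
    (hbulk : ω₀ * ‖r‖ ≤ ‖V.starProjection r‖) (hu' : u' ∈ V)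
    (hres : ‖V.starProjection (B u' - f)‖ ≤ γ * ‖r‖) :
    ⟪B (u - u'), u - u'⟫ ≤ (1 - ((1 - ζ) * ω₀ - ζ) ^ 2 * (‖B‖ * ‖Binv‖)⁻¹
      + γ ^ 2 * (1 + ζ) ^ 2 * (‖B‖ * ‖Binv‖)) * ⟪B (u - w), u - w⟫ := by
  obtain ⟨g, hg, hgf⟩ := V.exists_mem_map_sub_mem_orthogonal hc hcoer f
  have horth : ∀ v ∈ V, ⟪B (u - g), v⟫ = 0 := fun v hv => by
    rw [map_sub, hu, ← neg_sub, inner_neg_left, V.inner_left_of_mem_orthogonal hv hgf, neg_zero]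
  have hsplit : ∀ v ∈ V, ⟪B (u - v), u - v⟫ = ⟪B (u - g), u - g⟫ + ⟪B (g - v), g - v⟫ :=
    fun v hv => by
      rw [← inner_map_add_self_of_inner_eq_zero hB.isSymmetric (horth _ (V.sub_mem hg hv)),
        sub_add_sub_cancel]
  have hNuw : ‖B (u - w)‖ = ‖B w - f‖ := by rw [map_sub, hu, norm_sub_rev]
  have hgain := V.sq_mul_inner_map_sub_self_le_of_bulk hgf hB hleft hu hω₀ hη hr hbulk
  have hloss : ⟪B (g - u'), g - u'⟫
      ≤ γ ^ 2 * (1 + ζ) ^ 2 * (‖B‖ * ‖Binv‖) * ⟪B (u - w), u - w⟫ := by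
    have hrN : ‖r‖ ≤ (1 + ζ) * ‖B w - f‖ := by linarith [norm_le_norm_add_norm_sub' r (B w - f)]
    calc ⟪B (g - u'), g - u'⟫ ≤ ‖Binv‖ * ‖V.starProjection (B u' - f)‖ ^ 2 :=
          V.inner_map_sub_self_le_norm_starProjection_sq hgf hB hright hg hu'
      _ ≤ ‖Binv‖ * (γ * ‖r‖) ^ 2 := by gcongr
      _ = ‖Binv‖ * γ ^ 2 * ‖r‖ ^ 2 := by ring
      _ ≤ ‖Binv‖ * γ ^ 2 * ((1 + ζ) ^ 2 * ‖B w - f‖ ^ 2) := by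
          gcongr; rw [← mul_pow]; gcongr
      _ ≤ ‖Binv‖ * γ ^ 2 * ((1 + ζ) ^ 2 * (‖B‖ * ⟪B (u - w), u - w⟫)) := by
          gcongr; rw [← hNuw]; exact hB.norm_map_sq_le _
      _ = _ := by ring
  have hgain' := inv_mul_le_of_le_mul₀ (by positivity) (hB.inner_nonneg_left _) hgain
  linear_combination hgain' + hloss - hsplit w hw + hsplit u' hu'

end Energy

section Sequences

variable {J : Type*}

def supported (Λ : Set J) : Submodule ℝ (lp (fun _ : J => ℝ) 2) where
  carrier := {v | ∀ i ∉ Λ, v i = 0}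
  add_mem' ha hb i hi := by simp [ha i hi, hb i hi]
  zero_mem' _ _ := rfl
  smul_mem' c v hv i hi := by simp [hv i hi]

theorem isClosed_supported (Λ : Set J) :
    IsClosed (supported Λ : Set (lp (fun _ : J => ℝ) 2)) := by
  simp only [supported, Submodule.coe_set_mk, AddSubmonoid.coe_set_mk,
    AddSubsemigroup.coe_set_mk, Set.ofPred_forall]
  exact isClosed_iInter fun i => isClosed_iInter fun _ =>
    isClosed_eq (lp.lipschitzWith_one_eval 2 i).continuous continuous_const

instance (Λ : Set J) : CompleteSpace (supported Λ) :=
  (isClosed_supported Λ).completeSpace_coe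

theorem starProjection_supported (Λ : Set J) (v : lp (fun _ : J => ℝ) 2) :
    (supported Λ).starProjection v = restr Λ v := by
  refine Submodule.eq_starProjection_of_mem_of_inner_eq_zero (fun i hi => if_neg hi)
    fun x hx => ?_
  rw [lp.inner_eq_tsum]
  refine (tsum_congr fun i => ?_).trans tsum_zero
  by_cases hi : i ∈ Λ
  · have h : (v - restr Λ v) i = 0 := sub_eq_zero.mpr (if_pos hi).symm
    simp [h]
  · simp [hx i hi]

end Sequences

theorem stmt_17_general {J : Type*}
    (B Binv : lp (fun _ : J => ℝ) 2 →L[ℝ] lp (fun _ : J => ℝ) 2)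
    (rB RB : ℝ) (hrB : 0 < rB)
    (hsa : ∀ x y, ⟪B x, y⟫ = ⟪x, B y⟫)
    (hell : ∀ v, rB * ‖v‖ ^ 2 ≤ ⟪B v, v⟫ ∧ ⟪B v, v⟫ ≤ RB * ‖v‖ ^ 2)
    (hinv1 : Binv.comp B = ContinuousLinearMap.id ℝ _)
    (hinv2 : B.comp Binv = ContinuousLinearMap.id ℝ _)
    (f u : lp (fun _ : J => ℝ) 2) (hu : B u = f)
    (ζ ω₀ γ : ℝ) (hω₀0 : 0 < ω₀)
    (hpos : 0 < (1 - ζ) * ω₀ - ζ)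
    (w r : lp (fun _ : J => ℝ) 2)
    (hr : ‖r - (B w - f)‖ ≤ ζ * ‖B w - f‖)
    (Λ' : Finset J)
    (hwsupp : ∀ i : J, i ∉ Λ' → w i = 0)
    (hbulk : ω₀ * ‖r‖ ≤ ‖restr (↑Λ') r‖)
    (u' : lp (fun _ : J => ℝ) 2)
    (hu'supp : ∀ i : J, i ∉ Λ' → u' i = 0)
    (hu'res : ‖restr (↑Λ') (B u' - f)‖ ≤ γ * ‖r‖) :
    Real.sqrt ⟪B (u - u'), u - u'⟫ ≤
      Real.sqrt (1 - ((1 - ζ) * ω₀ - ζ) ^ 2 * (‖B‖ * ‖Binv‖)⁻¹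
          + γ ^ 2 * (1 + ζ) ^ 2 * (‖B‖ * ‖Binv‖)) *
        Real.sqrt ⟪B (u - w), u - w⟫ := by
  have hB : B.IsPositive := ⟨hsa, fun v => (by positivity : 0 ≤ rB * ‖v‖ ^ 2).trans (hell v).1⟩
  have hleft : Function.LeftInverse Binv B := DFunLike.congr_fun hinv1
  have hright : Function.RightInverse Binv B := DFunLike.congr_fun hinv2
  rw [← starProjection_supported] at hbulk hu'res
  have key := galerkin_step_energy_le (supported (Λ' : Set J)) hB hrB (fun v => (hell v).1)
    hleft hright hu hω₀0.le hpos.le hr (fun i hi => hwsupp i hi) hbulk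
    (fun i hi => hu'supp i hi) hu'res
  rw [← Real.sqrt_mul' _ (hB.inner_nonneg_left _)]
  exact Real.sqrt_le_sqrt key

/-- **One step of the inexact adaptive Galerkin iteration is a contraction in the energy
norm.**  With `B` bounded, self-adjoint and elliptic on `H = ℓ²(𝒥)`, boundedly invertible
with inverse `Binv`, `κ(B) = ‖B‖·‖B⁻¹‖`, and `u = B⁻¹f`:  let `ζ ≥ 0`, `ω₀ ∈ (0,1]` with
`(1−ζ)ω₀ − ζ > 0`, `γ ≥ 0`; let `w ∈ H`, `r` with `‖r − (Bw − f)‖ ≤ ζ‖Bw − f‖`, `Λ'`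
finite with `supp w ⊆ Λ'` and `‖r|_{Λ'}‖ ≥ ω₀‖r‖`, and `u'` with `supp u' ⊆ Λ'` and
`‖(Bu' − f)|_{Λ'}‖ ≤ γ‖r‖`.  Then `‖u − u'‖_B ≤ ρ‖u − w‖_B` with
`ρ = (1 − ((1−ζ)ω₀ − ζ)²·κ(B)⁻¹ + γ²(1+ζ)²·κ(B))^{1/2}`. -/
theorem stmt_17 {J : Type*} [Countable J]
    (B Binv : lp (fun _ : J => ℝ) 2 →L[ℝ] lp (fun _ : J => ℝ) 2)
    (rB RB : ℝ) (hrB : 0 < rB) (hrRB : rB ≤ RB)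
    (hsa : ∀ x y, ⟪B x, y⟫ = ⟪x, B y⟫)
    (hell : ∀ v, rB * ‖v‖ ^ 2 ≤ ⟪B v, v⟫ ∧ ⟪B v, v⟫ ≤ RB * ‖v‖ ^ 2)
    (hinv1 : Binv.comp B = ContinuousLinearMap.id ℝ _)
    (hinv2 : B.comp Binv = ContinuousLinearMap.id ℝ _)
    (f u : lp (fun _ : J => ℝ) 2) (hu : B u = f)
    (ζ ω₀ γ : ℝ) (hζ : 0 ≤ ζ) (hω₀0 : 0 < ω₀) (hω₀1 : ω₀ ≤ 1)
    (hpos : 0 < (1 - ζ) * ω₀ - ζ) (hγ : 0 ≤ γ)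
    (w r : lp (fun _ : J => ℝ) 2)
    (hr : ‖r - (B w - f)‖ ≤ ζ * ‖B w - f‖)
    (Λ' : Finset J)
    (hwsupp : ∀ i : J, i ∉ Λ' → w i = 0)
    (hbulk : ω₀ * ‖r‖ ≤ ‖restr (↑Λ') r‖)
    (u' : lp (fun _ : J => ℝ) 2)
    (hu'supp : ∀ i : J, i ∉ Λ' → u' i = 0)
    (hu'res : ‖restr (↑Λ') (B u' - f)‖ ≤ γ * ‖r‖) :
    Real.sqrt ⟪B (u - u'), u - u'⟫ ≤
      Real.sqrt (1 - ((1 - ζ) * ω₀ - ζ) ^ 2 * (‖B‖ * ‖Binv‖)⁻¹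
          + γ ^ 2 * (1 + ζ) ^ 2 * (‖B‖ * ‖Binv‖)) *
        Real.sqrt ⟪B (u - w), u - w⟫ :=
  stmt_17_general B Binv rB RB hrB hsa hell hinv1 hinv2 f u hu ζ ω₀ γ hω₀0 hpos w r hr Λ' hwsupp
    hbulk u' hu'supp hu'res
end

section
/- Validity of the residual-approximation stopping criterion: Let X be a real normed space and g, r̂, r ∈ X. Let η ≥ 0 and 0 ≤ ζ̂ < ζ. If ‖r̂ − g‖ ≤ η, ‖r̂ − r‖ ≤ ζ̂‖r̂‖, and (1+ζ)·η ≤ (ζ − ζ̂)·‖r̂‖, then ‖r − g‖ ≤ ζ‖g‖. -/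
theorem stmt_19_general {X : Type*} [NormedAddCommGroup X]
    (g rhat r : X) (η ζhat ζ : ℝ)
    (hζhat : 0 ≤ ζhat) (hζ : ζhat < ζ)
    (h1 : ‖rhat - g‖ ≤ η)
    (h2 : ‖rhat - r‖ ≤ ζhat * ‖rhat‖)
    (h3 : (1 + ζ) * η ≤ (ζ - ζhat) * ‖rhat‖) :
    ‖r - g‖ ≤ ζ * ‖g‖ := by
  have hrhat : ‖rhat‖ ≤ ‖g‖ + η := (norm_le_insert' rhat g).trans (by gcongr)
  have hscaled : ζ * ‖rhat‖ ≤ ζ * (‖g‖ + η) := by gcongr; linarith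
  calc ‖r - g‖ ≤ ‖rhat - r‖ + ‖rhat - g‖ := by
        rw [norm_sub_rev rhat r]; exact norm_sub_le_norm_sub_add_norm_sub r rhat g
    _ ≤ ζhat * ‖rhat‖ + η := add_le_add h2 h1
    -- `ζ ‖g‖ ≥ ζ ‖r̂‖ - ζ η = ζhat ‖r̂‖ + (ζ - ζhat) ‖r̂‖ - ζ η ≥ ζhat ‖r̂‖ + η` by `h3`
    _ ≤ ζ * ‖g‖ := by linarith

/-- **Validity of the residual-approximation stopping criterion.**
Let `X` be a real normed space and `g, r̂, r ∈ X`. Let `η ≥ 0` and `0 ≤ ζ̂ < ζ`.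
If `‖r̂ − g‖ ≤ η`, `‖r̂ − r‖ ≤ ζ̂‖r̂‖`, and `(1+ζ)·η ≤ (ζ − ζ̂)·‖r̂‖`,
then `‖r − g‖ ≤ ζ‖g‖`. -/
theorem stmt_19 {X : Type*} [NormedAddCommGroup X] [NormedSpace ℝ X]
    (g rhat r : X) (η ζhat ζ : ℝ)
    (hη : 0 ≤ η) (hζhat : 0 ≤ ζhat) (hζ : ζhat < ζ)
    (h1 : ‖rhat - g‖ ≤ η)
    (h2 : ‖rhat - r‖ ≤ ζhat * ‖rhat‖)
    (h3 : (1 + ζ) * η ≤ (ζ - ζhat) * ‖rhat‖) :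
    ‖r - g‖ ≤ ζ * ‖g‖ :=
  stmt_19_general g rhat r η ζhat ζ hζhat hζ h1 h2 h3
end
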